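/- arXiv:0910.2591 — 3 statements merged into one kernel-verified Lean document; each statement's English description precedes it below -/
import Mathlib

section
/- Let μ be a nonzero Radon measure on ℝⁿ and let x be a point of the support of μ (i.e. μ(B(x,ρ)) > 0 for every ρ > 0). If ν is a tangent measure of μ at x, then every tangent measure of ν at 0 is a tangent measure of μ at x; that is, Tan(ν,0) ⊆ Tan(μ,x). -/
open MeasureTheory Metric Filter Topology

noncomputable section

abbrev En (n : ℕ) : Type := EuclideanSpace ℝ (Fin n)

/-- The map `T_{x,r}(y) = (y - x)/r`. -/
def Tfun (n : ℕ) (x : En n) (r : ℝ) (y : En n) : En n := r⁻¹ • (y - x)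

/-- The image measure `T_{x,r}[μ]`. -/
def Tmap (n : ℕ) (x : En n) (r : ℝ) (μ : Measure (En n)) : Measure (En n) :=
  Measure.map (Tfun n x r) μ

/-- Weak convergence of a sequence of measures. -/
def WeakConv (n : ℕ) (μs : ℕ → Measure (En n)) (μ : Measure (En n)) : Prop :=
  ∀ f : En n → ℝ, Continuous f → HasCompactSupport f →
    Tendsto (fun i => ∫ y, f y ∂(μs i)) atTop (𝓝 (∫ y, f y ∂μ))

/-- `ν` is a tangent measure of `μ` at `x`. -/
def IsTangent (n : ℕ) (μ : Measure (En n)) (x : En n) (ν : Measure (En n)) : Prop :=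
  ν ≠ 0 ∧ IsFiniteMeasureOnCompacts ν ∧
  ∃ r c : ℕ → ℝ, (∀ i, 0 < r i) ∧ Tendsto r atTop (𝓝 0) ∧ (∀ i, 0 < c i) ∧
    WeakConv n (fun i => (ENNReal.ofReal (c i)) • Tmap n x (r i) μ) ν

/-- `F_r(μ) = ∫₀^r μ(B(0,s)) ds`. -/
def Fr (n : ℕ) (μ : Measure (En n)) (r : ℝ) : ℝ :=
  ∫ s in Set.Ioc (0:ℝ) r, (μ (closedBall 0 s)).toReal

/-- `F_r(μ, ν)`, the sup over nonnegative 1-Lipschitz functions supported in `B(0,r)`. -/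
def FrDist (n : ℕ) (μ ν : Measure (En n)) (r : ℝ) : ℝ :=
  sSup {d : ℝ | ∃ f : En n → ℝ, (∀ y, 0 ≤ f y) ∧ LipschitzWith 1 f ∧
    tsupport f ⊆ closedBall 0 r ∧ d = |(∫ y, f y ∂μ) - (∫ y, f y ∂ν)|}

/-- `d_r(σ, ℳ)`: normalized distance of `σ` to the cone `ℳ` at scale `r`. -/
def dDist (n : ℕ) (σ : Measure (En n)) (M : Set (Measure (En n))) (r : ℝ) : ℝ :=
  if Fr n σ r = 0 then 1 else
    sInf {t : ℝ | ∃ ψ ∈ M, Fr n ψ r = 1 ∧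
      t = FrDist n ((ENNReal.ofReal (Fr n σ r))⁻¹ • σ) ψ r}

/-- Evaluation of a multivariate polynomial at a point of `ℝⁿ`. -/
def evalP (n : ℕ) (p : MvPolynomial (Fin n) ℝ) (x : En n) : ℝ :=
  MvPolynomial.eval (fun i => x i) p

/-- A polynomial is harmonic if its (formal) Laplacian vanishes. -/
def IsHarmonicPoly (n : ℕ) (p : MvPolynomial (Fin n) ℝ) : Prop :=
  ∑ i : Fin n, MvPolynomial.pderiv i (MvPolynomial.pderiv i p) = 0

/-- `‖h‖_{L∞(S^{n-1})}`. -/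
def supSphere (n : ℕ) (p : MvPolynomial (Fin n) ℝ) : ℝ :=
  sSup ((fun θ => |evalP n p θ|) '' sphere (0 : En n) 1)

/-- The partial derivative of `f` in the `i`-th coordinate direction. -/
def pd (n : ℕ) (i : Fin n) (f : En n → ℝ) (x : En n) : ℝ :=
  fderiv ℝ f x (EuclideanSpace.single i 1)

/-- The Laplacian of a function on `ℝⁿ`. -/
def laplacian (n : ℕ) (f : En n → ℝ) (x : En n) : ℝ :=
  ∑ i : Fin n, pd n i (pd n i f) x

/-- Iterated partial derivative `D^α`. -/
def Dmulti (n : ℕ) (α : Fin n → ℕ) (f : En n → ℝ) : En n → ℝ :=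
  (List.finRange n).foldr (fun i g => (pd n i)^[α i] g) f

/-- `ω` is a harmonic measure associated to the harmonic polynomial `p`. -/
def IsAssocHM (n : ℕ) (p : MvPolynomial (Fin n) ℝ) (ω : Measure (En n)) : Prop :=
  IsFiniteMeasureOnCompacts ω ∧
  ∀ φ : En n → ℝ, ContDiff ℝ (⊤ : ℕ∞) φ → HasCompactSupport φ →
    ∫ x, φ x ∂ω = ∫ x in {x : En n | 0 < evalP n p x}, evalP n p x * laplacian n φ x

/-- The cone `ℱ_k` of harmonic measures associated to homogeneous harmonic
polynomials of degree `k`. -/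
def Fcone (n k : ℕ) : Set (Measure (En n)) :=
  {ω | ∃ p : MvPolynomial (Fin n) ℝ, p ≠ 0 ∧ IsHarmonicPoly n p ∧
    MvPolynomial.IsHomogeneous p k ∧ IsAssocHM n p ω}

/-- The cone `𝒫_d` of harmonic measures associated to nonzero harmonic polynomials of
degree at most `d` vanishing at the origin. -/
def Pcone (n d : ℕ) : Set (Measure (En n)) :=
  {ω | ∃ p : MvPolynomial (Fin n) ℝ, p ≠ 0 ∧ IsHarmonicPoly n p ∧
    p.totalDegree ≤ d ∧ MvPolynomial.coeff 0 p = 0 ∧ IsAssocHM n p ω}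

/-- `ζ(h) = max_{1 ≤ k ≤ d-1} ‖h_k‖_{L∞(S^{n-1})} / ‖h_d‖_{L∞(S^{n-1})}`. -/
def zeta (n d : ℕ) (p : MvPolynomial (Fin n) ℝ) : ℝ :=
  Finset.fold max 0 (fun k => supSphere n (MvPolynomial.homogeneousComponent k p) /
    supSphere n (MvPolynomial.homogeneousComponent d p)) (Finset.Ico 1 d)

/-- `ζ_*(h) = max_{j+1 ≤ k ≤ d} ‖h_k‖_{L∞(S^{n-1})} / ‖h_j‖_{L∞(S^{n-1})}`. -/
def zetaStar (n j d : ℕ) (p : MvPolynomial (Fin n) ℝ) : ℝ :=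
  Finset.fold max 0 (fun k => supSphere n (MvPolynomial.homogeneousComponent k p) /
    supSphere n (MvPolynomial.homogeneousComponent j p)) (Finset.Icc (j+1) d)

/-- The surface ((n-1)-dimensional Hausdorff) measure on `ℝⁿ`. -/
def sphMeasure (n : ℕ) : Measure (En n) := Measure.hausdorffMeasure ((n : ℝ) - 1)

section Aux

variable {n : ℕ}

lemma tfun_continuous (x : En n) (r : ℝ) : Continuous (Tfun n x r) := by
  unfold Tfun; fun_prop

/-- `Tfun` as a homeomorphism, for `r ≠ 0`. -/
def Thomeo (n : ℕ) (x : En n) {r : ℝ} (hr : r ≠ 0) : En n ≃ₜ En n :=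
  (Homeomorph.subRight x).trans (Homeomorph.smulOfNeZero r⁻¹ (inv_ne_zero hr))

lemma Thomeo_eq (x : En n) {r : ℝ} (hr : r ≠ 0) : ⇑(Thomeo n x hr) = Tfun n x r := rfl

lemma tmap_fmc (μ : Measure (En n)) [IsFiniteMeasureOnCompacts μ] (x : En n) {r : ℝ}
    (hr : r ≠ 0) : IsFiniteMeasureOnCompacts (Tmap n x r μ) := by
  constructor
  intro K hK
  rw [Tmap, ← Thomeo_eq x hr,
    Measure.map_apply (Thomeo n x hr).continuous.measurable hK.measurableSet]
  exact (((Thomeo n x hr).isCompact_preimage).2 hK).measure_lt_top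

lemma smul_fmc (σ : Measure (En n)) [IsFiniteMeasureOnCompacts σ] (a : ℝ) :
    IsFiniteMeasureOnCompacts ((ENNReal.ofReal a) • σ) := by
  constructor
  intro K hK
  rw [Measure.smul_apply, smul_eq_mul]
  exact ENNReal.mul_lt_top ENNReal.ofReal_lt_top hK.measure_lt_top

lemma integral_tmap (μ : Measure (En n)) (x : En n) (r : ℝ) {f : En n → ℝ}
    (hf : Continuous f) :
    ∫ y, f y ∂(Tmap n x r μ) = ∫ y, f (Tfun n x r y) ∂μ :=
  integral_map (tfun_continuous x r).aemeasurable hf.aestronglyMeasurable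

lemma tfun_tfun (x : En n) (r s : ℝ) (y : En n) :
    Tfun n 0 s (Tfun n x r y) = Tfun n x (r * s) y := by
  simp only [Tfun, sub_zero, smul_smul, mul_inv]
  ring_nf

lemma hcs_comp {f : En n → ℝ} (hf : HasCompactSupport f) (x : En n) {r : ℝ} (hr : r ≠ 0) :
    HasCompactSupport (fun y => f (Tfun n x r y)) :=
  hf.comp_homeomorph (Thomeo n x hr)

lemma abs_integral_le (σ : Measure (En n)) [IsFiniteMeasureOnCompacts σ] {f : En n → ℝ}
    {A δ : ℝ} (hsupp : ∀ y, y ∉ closedBall (0 : En n) A → f y = 0)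
    (hδ : ∀ y, |f y| ≤ δ) :
    |∫ y, f y ∂σ| ≤ δ * (σ (closedBall 0 A)).toReal := by
  rw [← MeasureTheory.setIntegral_eq_integral_of_forall_compl_eq_zero hsupp,
    ← Real.norm_eq_abs]
  exact norm_setIntegral_le_of_norm_le_const
    ((isCompact_closedBall (0 : En n) A).measure_lt_top)
    (fun y _ => hδ y)

/-- An explicit continuous bump: `1` on `closedBall 0 A`, supported in `closedBall 0 (A+1)`. -/
def chi (n : ℕ) (A : ℝ) : En n → ℝ := fun y => max 0 (min 1 (A + 1 - ‖y‖))

lemma chi_continuous (A : ℝ) : Continuous (chi n A) := by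
  have h : Continuous fun y : En n => ‖y‖ := continuous_norm
  exact continuous_const.max (continuous_const.min (continuous_const.sub h))

lemma chi_nonneg (A : ℝ) (y : En n) : 0 ≤ chi n A y := le_max_left _ _

lemma chi_le_one (A : ℝ) (y : En n) : chi n A y ≤ 1 :=
  max_le zero_le_one (min_le_left _ _)

lemma chi_eq_one (A : ℝ) {y : En n} (hy : ‖y‖ ≤ A) : chi n A y = 1 := by
  have h1 : (1:ℝ) ≤ A + 1 - ‖y‖ := by linarith
  rw [chi, min_eq_left h1, max_eq_right zero_le_one]

lemma chi_eq_zero (A : ℝ) {y : En n} (hy : ¬ ‖y‖ ≤ A + 1) : chi n A y = 0 := by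
  push_neg at hy
  have h1 : A + 1 - ‖y‖ ≤ 0 := by linarith
  have h2 : min 1 (A + 1 - ‖y‖) ≤ 0 := le_trans (min_le_right _ _) h1
  rw [chi, max_eq_left h2]

lemma mem_closedBall_iff_norm_le' {A : ℝ} {y : En n} :
    y ∈ closedBall (0 : En n) A ↔ ‖y‖ ≤ A := by
  simp [Metric.mem_closedBall, dist_zero_right]

lemma chi_hcs (A : ℝ) : HasCompactSupport (chi n A) :=
  HasCompactSupport.intro (isCompact_closedBall (0 : En n) (A + 1))
    (fun y hy => chi_eq_zero A (by simpa [mem_closedBall_iff_norm_le'] using hy))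

/-- The countable family of test functions used for the diagonal argument. -/
lemma exists_test_family (n : ℕ) : ∃ D : ℕ → En n → ℝ,
    (∀ k, Continuous (D k) ∧ HasCompactSupport (D k)) ∧
    (∀ R : ℕ, ∃ k, (∀ y, 0 ≤ D k y) ∧ ∀ y ∈ closedBall (0 : En n) R, 1 ≤ D k y) ∧
    (∀ f : En n → ℝ, Continuous f → ∀ R : ℕ, tsupport f ⊆ closedBall 0 R → ∀ δ : ℝ, 0 < δ →
      ∃ k, (∀ y, |f y - D k y| ≤ δ) ∧
        ∀ y, y ∉ closedBall (0 : En n) ((R : ℝ) + 1) → D k y = 0) := by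
  obtain ⟨G, hGc, hGd⟩ := TopologicalSpace.exists_countable_dense C(En n, ℝ)
  set S : Set (En n → ℝ) :=
    ⋃ R : ℕ, ({chi n R} ∪ (fun g : C(En n, ℝ) => fun y => chi n R y * g y) '' G) with hS
  have hSc : S.Countable :=
    Set.countable_iUnion fun R => (Set.countable_singleton _).union (hGc.image _)
  have hSne : S.Nonempty := ⟨chi n ((0:ℕ):ℝ), Set.mem_iUnion.2 ⟨0, Or.inl rfl⟩⟩
  obtain ⟨D, hD⟩ := hSc.exists_eq_range hSne
  refine ⟨D, ?_, ?_, ?_⟩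
  · intro k
    have hk : D k ∈ S := hD ▸ Set.mem_range_self k
    rw [hS] at hk
    obtain ⟨R, hR⟩ := Set.mem_iUnion.1 hk
    rcases hR with h | ⟨g, _, h⟩
    · rw [Set.mem_singleton_iff] at h; rw [h]
      exact ⟨chi_continuous R, chi_hcs R⟩
    · have h2 : D k = fun y => chi n (R:ℝ) y * g y := by rw [← h]
      rw [h2]
      refine ⟨(chi_continuous R).mul g.continuous, ?_⟩
      exact HasCompactSupport.intro (isCompact_closedBall (0 : En n) ((R:ℝ) + 1))
        (fun y hy => by
          rw [chi_eq_zero R (by simpa [mem_closedBall_iff_norm_le'] using hy), zero_mul])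
  · intro R
    have hmem : chi n R ∈ S := Set.mem_iUnion.2 ⟨R, Or.inl rfl⟩
    rw [hD] at hmem
    obtain ⟨k, hk⟩ := hmem
    refine ⟨k, fun y => ?_, fun y hy => ?_⟩
    · simp only [hk]; exact chi_nonneg R y
    · simp only [hk]
      rw [chi_eq_one R (mem_closedBall_iff_norm_le'.1 hy)]
  · intro f hf R hfsupp δ hδ
    have hfm : (⟨f, hf⟩ : C(En n, ℝ)) ∈ closure G := hGd _
    obtain ⟨u, huG, hu⟩ := mem_closure_iff_seq_limit.1 hfm
    have huni := Metric.tendstoUniformlyOn_iff.1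
      ((ContinuousMap.tendsto_iff_forall_isCompact_tendstoUniformlyOn.1 hu)
        (closedBall (0 : En n) ((R : ℝ) + 2)) (isCompact_closedBall _ _)) δ hδ
    obtain ⟨m, hm⟩ := huni.exists
    have hmemS : (fun y => chi n R y * u m y) ∈ S :=
      Set.mem_iUnion.2 ⟨R, Or.inr ⟨u m, huG m, rfl⟩⟩
    rw [hD] at hmemS
    obtain ⟨k, hk⟩ := hmemS
    have hfz : ∀ y : En n, ¬ ‖y‖ ≤ (R : ℝ) → f y = 0 := by
      intro y hy
      exact image_eq_zero_of_notMem_tsupport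
        (fun hmem => hy (mem_closedBall_iff_norm_le'.1 (hfsupp hmem)))
    refine ⟨k, fun y => ?_, fun y hy => ?_⟩
    · simp only [hk]
      by_cases h1 : ‖y‖ ≤ (R : ℝ)
      · have hyK : y ∈ closedBall (0 : En n) ((R : ℝ) + 2) :=
          mem_closedBall_iff_norm_le'.2 (by linarith)
        have := hm y hyK
        rw [chi_eq_one R h1, one_mul]
        rw [Real.dist_eq] at this
        exact le_of_lt (by simpa using this)
      · by_cases h2 : ‖y‖ ≤ (R : ℝ) + 2
        · have hyK : y ∈ closedBall (0 : En n) ((R : ℝ) + 2) :=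
            mem_closedBall_iff_norm_le'.2 h2
          have hdist := hm y hyK
          rw [Real.dist_eq] at hdist
          rw [hfz y h1, zero_sub, abs_neg, abs_mul,
            abs_of_nonneg (chi_nonneg R y)]
          have h3 : |(u m) y| = |f y - (u m) y| := by rw [hfz y h1, zero_sub, abs_neg]
          have h4 : chi n (R : ℝ) y * |(u m) y| ≤ 1 * |(u m) y| :=
            mul_le_mul_of_nonneg_right (chi_le_one R y) (abs_nonneg _)
          calc chi n (R : ℝ) y * |(u m) y| ≤ 1 * |(u m) y| := h4
            _ = |f y - (u m) y| := by rw [one_mul, h3]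
            _ ≤ δ := le_of_lt (by simpa using hdist)
        · have hch : chi n (R : ℝ) y = 0 := chi_eq_zero R (by push_neg at h2 ⊢; linarith)
          rw [hfz y h1, hch, zero_mul, sub_zero, abs_zero]
          exact hδ.le
    · simp only [hk]
      rw [chi_eq_zero R (by simpa [mem_closedBall_iff_norm_le'] using hy), zero_mul]

end Aux

/-- Tangent measures of tangent measures (at 0) are tangent measures. -/
theorem tangent_of_tangent_at_zero (n : ℕ) (μ : Measure (En n)) [IsFiniteMeasureOnCompacts μ]
    (hμ : μ ≠ 0) (x : En n) (hx : ∀ ρ : ℝ, 0 < ρ → 0 < μ (closedBall x ρ))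
    (ν : Measure (En n)) (hν : IsTangent n μ x ν)
    (ρ : Measure (En n)) (hρ : IsTangent n ν 0 ρ) :
    IsTangent n μ x ρ := by
  obtain ⟨hν0, hνfin, r, c, hr, hrl, hc, hconv⟩ := hν
  obtain ⟨hρ0, hρfin, s, d, hs, hsl, hd, hconv2⟩ := hρ
  obtain ⟨D, hDprop, hDbump, hDdense⟩ := exists_test_family n
  -- Step A: composition of blowups
  have stepA : ∀ (j : ℕ) (h : En n → ℝ), Continuous h → HasCompactSupport h →
      Tendsto (fun i => ∫ y, h y ∂((ENNReal.ofReal (d j * c i)) • Tmap n x (r i * s j) μ))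
        atTop (𝓝 (∫ y, h y ∂((ENNReal.ofReal (d j)) • Tmap n 0 (s j) ν))) := by
    intro j h hh hhc
    have hsj : s j ≠ 0 := (hs j).ne'
    have hcomp : Continuous fun y => h (Tfun n 0 (s j) y) := hh.comp (tfun_continuous _ _)
    have key : ∀ i, ∫ y, h y ∂((ENNReal.ofReal (d j * c i)) • Tmap n x (r i * s j) μ)
        = (d j) * ∫ y, (fun z => h (Tfun n 0 (s j) z)) y
            ∂((ENNReal.ofReal (c i)) • Tmap n x (r i) μ) := by
      intro i
      rw [integral_smul_measure, integral_smul_measure, integral_tmap μ x _ hh,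
        integral_tmap μ x (r i) hcomp,
        ENNReal.toReal_ofReal (mul_nonneg (hd j).le (hc i).le),
        ENNReal.toReal_ofReal (hc i).le, smul_eq_mul, smul_eq_mul]
      simp_rw [tfun_tfun]
      ring
    have lim2 : Tendsto (fun i => ∫ y, (fun z => h (Tfun n 0 (s j) z)) y
        ∂((ENNReal.ofReal (c i)) • Tmap n x (r i) μ)) atTop
        (𝓝 (∫ y, (fun z => h (Tfun n 0 (s j) z)) y ∂ν)) :=
      hconv _ hcomp (hcs_comp hhc 0 hsj)
    have heq : ∫ y, h y ∂((ENNReal.ofReal (d j)) • Tmap n 0 (s j) ν)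
        = d j * ∫ y, (fun z => h (Tfun n 0 (s j) z)) y ∂ν := by
      rw [integral_smul_measure, integral_tmap ν 0 (s j) hh,
        ENNReal.toReal_ofReal (hd j).le, smul_eq_mul]
    rw [heq]
    simp_rw [key]
    exact lim2.const_mul (d j)
  -- diagonal choice
  have hchoice : ∀ j : ℕ, ∃ i : ℕ, r i ≤ 1 ∧ ∀ k ≤ j,
      |(∫ y, D k y ∂((ENNReal.ofReal (d j * c i)) • Tmap n x (r i * s j) μ)) -
        ∫ y, D k y ∂((ENNReal.ofReal (d j)) • Tmap n 0 (s j) ν)| ≤ 1 / (j + 1) := by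
    intro j
    have h1 : ∀ᶠ i in atTop, r i ≤ 1 :=
      (hrl.eventually (gt_mem_nhds one_pos)).mono fun i hi => hi.le
    have hpos : (0:ℝ) < 1 / (j + 1) := by positivity
    have h2 : ∀ᶠ i in atTop, ∀ k ∈ Set.Iic j,
        |(∫ y, D k y ∂((ENNReal.ofReal (d j * c i)) • Tmap n x (r i * s j) μ)) -
          ∫ y, D k y ∂((ENNReal.ofReal (d j)) • Tmap n 0 (s j) ν)| ≤ 1 / (j + 1) := by
      refine (eventually_all_finite (Set.finite_Iic j)).2 fun k _ => ?_
      obtain ⟨N, hN⟩ := Metric.tendsto_atTop.1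
        (stepA j (D k) (hDprop k).1 (hDprop k).2) (1 / (j + 1)) hpos
      exact eventually_atTop.2 ⟨N, fun i hi =>
        le_of_lt (by simpa [Real.dist_eq] using hN i hi)⟩
    obtain ⟨i, hi1, hi2⟩ := (h1.and h2).exists
    exact ⟨i, hi1, fun k hk => hi2 k hk⟩
  choose ι hι1 hι2 using hchoice
  refine ⟨hρ0, hρfin, (fun j => r (ι j) * s j), (fun j => d j * c (ι j)),
    fun j => mul_pos (hr _) (hs j), ?_, fun j => mul_pos (hd j) (hc _), ?_⟩
  · refine squeeze_zero (fun j => (mul_pos (hr _) (hs j)).le) (fun j => ?_) hsl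
    calc r (ι j) * s j ≤ 1 * s j := mul_le_mul_of_nonneg_right (hι1 j) (hs j).le
      _ = s j := one_mul _
  · -- weak convergence along the diagonal
    have hσfin : ∀ m : ℕ, IsFiniteMeasureOnCompacts
        ((ENNReal.ofReal (d m * c (ι m))) • Tmap n x (r (ι m) * s m) μ) := fun m => by
      haveI := tmap_fmc μ x (mul_pos (hr (ι m)) (hs m)).ne'
      exact smul_fmc _ _
    haveI := hρfin
    have L1 : ∀ k, Tendsto (fun m => ∫ y, D k y
        ∂((ENNReal.ofReal (d m * c (ι m))) • Tmap n x (r (ι m) * s m) μ)) atTop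
        (𝓝 (∫ y, D k y ∂ρ)) := by
      intro k
      have hlim2 : Tendsto (fun m => ∫ y, D k y ∂((ENNReal.ofReal (d m)) • Tmap n 0 (s m) ν))
          atTop (𝓝 (∫ y, D k y ∂ρ)) := hconv2 (D k) (hDprop k).1 (hDprop k).2
      have hdiff : Tendsto (fun m =>
          (∫ y, D k y ∂((ENNReal.ofReal (d m * c (ι m))) • Tmap n x (r (ι m) * s m) μ)) -
            ∫ y, D k y ∂((ENNReal.ofReal (d m)) • Tmap n 0 (s m) ν)) atTop (𝓝 0) := by
        refine squeeze_zero_norm' ?_ tendsto_one_div_add_atTop_nhds_zero_nat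
        filter_upwards [eventually_ge_atTop k] with m hm
        simpa [Real.norm_eq_abs] using hι2 m k hm
      have := hdiff.add hlim2
      simpa using this
    have L2 : ∀ A : ℕ, ∃ C : ℝ, 0 ≤ C ∧ ∀ m : ℕ,
        (((ENNReal.ofReal (d m * c (ι m))) • Tmap n x (r (ι m) * s m) μ)
          (closedBall (0 : En n) (A : ℝ))).toReal ≤ C := by
      intro A
      obtain ⟨k, hk0, hk1⟩ := hDbump A
      obtain ⟨C, hC⟩ := (L1 k).bddAbove_range
      have hle : ∀ m : ℕ, (((ENNReal.ofReal (d m * c (ι m))) • Tmap n x (r (ι m) * s m) μ)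
          (closedBall (0 : En n) (A : ℝ))).toReal ≤ C := by
        intro m
        refine le_trans ?_ (hC (Set.mem_range_self m))
        haveI := hσfin m
        have hint : Integrable (D k)
            ((ENNReal.ofReal (d m * c (ι m))) • Tmap n x (r (ι m) * s m) μ) :=
          (hDprop k).1.integrable_of_hasCompactSupport (hDprop k).2
        have hind : Integrable ((closedBall (0 : En n) (A : ℝ)).indicator
            (1 : En n → ℝ))
            ((ENNReal.ofReal (d m * c (ι m))) • Tmap n x (r (ι m) * s m) μ) := by
          rw [integrable_indicator_iff measurableSet_closedBall]
          exact integrableOn_const (isCompact_closedBall _ _).measure_lt_top.ne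
        calc (((ENNReal.ofReal (d m * c (ι m))) • Tmap n x (r (ι m) * s m) μ)
              (closedBall (0 : En n) (A : ℝ))).toReal
            = ∫ y, (closedBall (0 : En n) (A : ℝ)).indicator (1 : En n → ℝ) y
              ∂((ENNReal.ofReal (d m * c (ι m))) • Tmap n x (r (ι m) * s m) μ) := by
              rw [MeasureTheory.integral_indicator_one measurableSet_closedBall]; rfl
          _ ≤ ∫ y, D k y ∂((ENNReal.ofReal (d m * c (ι m))) • Tmap n x (r (ι m) * s m) μ) := by
              refine integral_mono hind hint fun y => ?_
              by_cases hy : y ∈ closedBall (0 : En n) (A : ℝ)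
              · simpa [Set.indicator_of_mem hy] using hk1 y hy
              · simpa [Set.indicator_of_notMem hy] using hk0 y
      exact ⟨C, le_trans ENNReal.toReal_nonneg (hle 0), hle⟩
    -- final ε-argument
    intro f hf hfc
    obtain ⟨A0, hA0⟩ := hfc.isBounded.subset_closedBall 0
    set R : ℕ := ⌈A0⌉₊ with hR
    have hfsupp : tsupport f ⊆ closedBall 0 (R : ℝ) :=
      hA0.trans (closedBall_subset_closedBall (Nat.le_ceil A0))
    obtain ⟨Cσ, hCσ0, hCσ⟩ := L2 (R + 1)
    have hBcast : ((R + 1 : ℕ) : ℝ) = (R : ℝ) + 1 := by push_cast; ring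
    set Cρ : ℝ := (ρ (closedBall (0 : En n) ((R : ℝ) + 1))).toReal with hCρdef
    have hCρ0 : 0 ≤ Cρ := ENNReal.toReal_nonneg
    rw [Metric.tendsto_atTop]
    intro ε hε
    set Sc : ℝ := Cσ + Cρ with hScdef
    have hSc : 0 ≤ Sc := add_nonneg hCσ0 hCρ0
    set δ : ℝ := ε / (2 * (Sc + 1)) with hδdef
    have hδ : 0 < δ := by positivity
    obtain ⟨k, hk1, hk2⟩ := hDdense f hf R hfsupp δ hδ
    obtain ⟨N, hN⟩ := Metric.tendsto_atTop.1 (L1 k) δ hδ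
    refine ⟨N, fun m hm => ?_⟩
    haveI := hσfin m
    set σm : Measure (En n) := (ENNReal.ofReal (d m * c (ι m))) • Tmap n x (r (ι m) * s m) μ
      with hσm
    have hfint : Integrable f σm := hf.integrable_of_hasCompactSupport hfc
    have hDint : Integrable (D k) σm :=
      (hDprop k).1.integrable_of_hasCompactSupport (hDprop k).2
    have hfintρ : Integrable f ρ := hf.integrable_of_hasCompactSupport hfc
    have hDintρ : Integrable (D k) ρ :=
      (hDprop k).1.integrable_of_hasCompactSupport (hDprop k).2
    have hvanish : ∀ y, y ∉ closedBall (0 : En n) ((R : ℝ) + 1) → f y - D k y = 0 := by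
      intro y hy
      have hf0 : f y = 0 := image_eq_zero_of_notMem_tsupport fun hmem =>
        hy (closedBall_subset_closedBall (by linarith) (hfsupp hmem))
      rw [hf0, hk2 y hy, sub_zero]
    have e1 : |(∫ y, f y ∂σm) - ∫ y, D k y ∂σm| ≤ δ * (σm (closedBall 0 ((R : ℝ) + 1))).toReal := by
      rw [← integral_sub hfint hDint]
      exact abs_integral_le σm hvanish hk1
    have e3 : |(∫ y, D k y ∂ρ) - ∫ y, f y ∂ρ| ≤ δ * Cρ := by
      rw [← integral_sub hDintρ hfintρ]
      have := abs_integral_le ρ (f := fun y => D k y - f y)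
        (fun y hy => by show D k y - f y = 0; rw [← neg_sub, hvanish y hy, neg_zero])
        (fun y => by show |D k y - f y| ≤ δ; rw [abs_sub_comm]; exact hk1 y)
      exact this
    have e2 : |(∫ y, D k y ∂σm) - ∫ y, D k y ∂ρ| < δ := by
      have := hN m hm
      rwa [Real.dist_eq] at this
    have hσmB : (σm (closedBall 0 ((R : ℝ) + 1))).toReal ≤ Cσ := by
      have := hCσ m
      rwa [hBcast] at this
    have tri : |(∫ y, f y ∂σm) - ∫ y, f y ∂ρ| ≤
        |(∫ y, f y ∂σm) - ∫ y, D k y ∂σm| + |(∫ y, D k y ∂σm) - ∫ y, D k y ∂ρ| +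
          |(∫ y, D k y ∂ρ) - ∫ y, f y ∂ρ| := by
      calc |(∫ y, f y ∂σm) - ∫ y, f y ∂ρ|
          ≤ |(∫ y, f y ∂σm) - ∫ y, D k y ∂ρ| + |(∫ y, D k y ∂ρ) - ∫ y, f y ∂ρ| :=
            abs_sub_le _ _ _
        _ ≤ (|(∫ y, f y ∂σm) - ∫ y, D k y ∂σm| + |(∫ y, D k y ∂σm) - ∫ y, D k y ∂ρ|) +
            |(∫ y, D k y ∂ρ) - ∫ y, f y ∂ρ| := by
            gcongr
            exact abs_sub_le _ _ _
    have hhalf : δ * (Sc + 1) = ε / 2 := by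
      rw [hδdef]; field_simp
    have hb1 : δ * (σm (closedBall 0 ((R : ℝ) + 1))).toReal ≤ δ * Cσ :=
      mul_le_mul_of_nonneg_left hσmB hδ.le
    rw [Real.dist_eq]
    have : |(∫ y, f y ∂σm) - ∫ y, f y ∂ρ| < δ * Cσ + δ + δ * Cρ := by
      refine lt_of_le_of_lt tri ?_
      have := e1.trans hb1
      linarith
    refine lt_of_lt_of_le this ?_
    have : δ * Cσ + δ + δ * Cρ = δ * (Sc + 1) := by rw [hScdef]; ring
    rw [this, hhalf]
    linarith

end
end

section
/- Let n ≥ 2 and k ≥ 1. There exists a constant l_{n,k} > 0, depending only on n and k, such that for every homogeneous harmonic polynomial h : ℝⁿ → ℝ of degree k, σ({θ ∈ S^{n−1} : |h(θ)| ≥ (1/2)‖h‖_{L∞(S^{n−1})}}) ≥ l_{n,k}. -/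
open MeasureTheory Metric Filter Topology

noncomputable section

lemma continuous_evalP (n : ℕ) (p : MvPolynomial (Fin n) ℝ) : Continuous (evalP n p) :=
  (MvPolynomial.continuous_eval p).comp (PiLp.continuous_ofLp 2 fun _ : Fin n => ℝ)

lemma abs_coord_le_norm (n : ℕ) (z : En n) (j : Fin n) : |z j| ≤ ‖z‖ := by
  rw [EuclideanSpace.norm_eq, ← Real.sqrt_sq_eq_abs]
  apply Real.sqrt_le_sqrt
  have := Finset.single_le_sum (f := fun i => ‖z i‖ ^ 2)
    (fun i _ => sq_nonneg _) (Finset.mem_univ j)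
  simpa [Real.norm_eq_abs, sq_abs] using this

set_option maxHeartbeats 1000000 in
lemma cap_lower_bound (n : ℕ) (hn : 2 ≤ n) (r : ℝ) (hrpos : 0 < r) (hrle : r ≤ 1/2) :
    min (volume (closedBall (0 : Fin (n-1) → ℝ) (r/(2*n)))) 1 ≤
      μH[(n:ℝ)-1] (sphere (0 : En n) 1 ∩
        closedBall (EuclideanSpace.single (⟨n-1, by omega⟩ : Fin n) (1:ℝ)) r) := by
  classical
  have hd0 : (0:ℝ) ≤ (n:ℝ) - 1 := by
    have : (2:ℝ) ≤ (n:ℝ) := by exact_mod_cast hn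
    linarith
  have hnn : (2:ℝ) ≤ (n:ℝ) := by exact_mod_cast hn
  set i0 : Fin n := ⟨n - 1, by omega⟩ with hi0
  set θone : En n := EuclideanSpace.single i0 (1:ℝ) with hθone
  set ρ : ℝ := r / (2 * n) with hρ
  have hρpos : 0 < ρ := by apply div_pos hrpos; positivity
  have hcard : ((n:ℝ) - 1) = ((Fintype.card (Fin (n-1)) : ℕ) : ℝ) := by
    rw [Fintype.card_fin, Nat.cast_sub (by omega)]
    norm_num
  set F : En n → (Fin (n-1) → ℝ) := fun x i => x (Fin.castLE (Nat.sub_le n 1) i) with hF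
  have hFlip : LipschitzWith 1 F := by
    apply LipschitzWith.of_dist_le_mul
    intro x y
    rw [NNReal.coe_one, one_mul]
    rw [dist_pi_le_iff dist_nonneg]
    intro i
    rw [Real.dist_eq, dist_eq_norm]
    have heq : x (Fin.castLE (Nat.sub_le n 1) i) - y (Fin.castLE (Nat.sub_le n 1) i)
        = (x - y) (Fin.castLE (Nat.sub_le n 1) i) := by
      rw [PiLp.sub_apply]
    rw [hF]; rw [heq]
    exact abs_coord_le_norm n (x - y) _
  have hsub1 : closedBall (0 : Fin (n-1) → ℝ) ρ ⊆
      F '' (sphere (0 : En n) 1 ∩ closedBall θone r) := by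
    intro y hy
    have hyc : ∀ i : Fin (n-1), |y i| ≤ ρ := by
      intro i
      have h1 : dist y 0 ≤ ρ := mem_closedBall.1 hy
      have := (dist_pi_le_iff (le_of_lt hρpos)).1 h1 i
      simpa [Real.dist_eq] using this
    set Ssum : ℝ := ∑ i : Fin (n-1), (y i)^2 with hSsum
    have hSnonneg : 0 ≤ Ssum := Finset.sum_nonneg fun i _ => sq_nonneg _
    have hSle : Ssum ≤ (n-1 : ℕ) * ρ^2 := by
      rw [hSsum]
      calc ∑ i : Fin (n-1), (y i)^2 ≤ ∑ _i : Fin (n-1), ρ^2 := by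
            apply Finset.sum_le_sum
            intro i _
            have := hyc i
            nlinarith [abs_nonneg (y i), sq_abs (y i)]
        _ = (n-1 : ℕ) * ρ^2 := by
            rw [Finset.sum_const, Finset.card_univ, Fintype.card_fin, nsmul_eq_mul]
    have hcastn1 : ((n-1 : ℕ) : ℝ) = (n:ℝ) - 1 := by
      rw [Nat.cast_sub (by omega)]; norm_num
    have hSr : Ssum ≤ r^2 / 8 := by
      rw [hcastn1] at hSle
      have hρ2 : ρ^2 = r^2 / (4 * (n:ℝ)^2) := by
        rw [hρ]; field_simp; ring
      rw [hρ2] at hSle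
      have h1 : ((n:ℝ) - 1) * (r^2 / (4 * (n:ℝ)^2)) ≤ r^2 / 8 := by
        rw [← mul_div_assoc]
        rw [div_le_div_iff₀ (by positivity) (by norm_num)]
        nlinarith [sq_nonneg r, sq_nonneg ((n:ℝ) - 2), hnn]
      linarith
    have hShalf : Ssum ≤ 1/2 := by nlinarith
    set G : ℕ → ℝ := fun m => if h : m < n - 1 then y ⟨m, h⟩ else Real.sqrt (1 - Ssum)
      with hG
    set x : En n := (WithLp.equiv 2 (Fin n → ℝ)).symm (fun j => G j) with hx
    have hx_apply : ∀ j : Fin n, x j = G j := by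
      intro j; rw [hx]; rfl
    have hsplit : ∀ g : ℕ → ℝ, ∑ j : Fin n, g (j:ℕ)
        = (∑ i : Fin (n-1), g (i:ℕ)) + g (n-1) := by
      intro g
      rw [Fin.sum_univ_eq_sum_range g n, Fin.sum_univ_eq_sum_range g (n-1),
        ← Finset.sum_range_succ, Nat.sub_add_cancel (by omega)]
    have hGsq : (1 : ℝ) - Ssum = (Real.sqrt (1 - Ssum))^2 :=
      (Real.sq_sqrt (by linarith)).symm
    have hsum_x : ∑ j : Fin n, (x j)^2 = 1 := by
      have h1 : ∀ j : Fin n, (x j)^2 = (fun m => (G m)^2) (j:ℕ) := by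
        intro j; rw [hx_apply]
      calc ∑ j : Fin n, (x j)^2 = ∑ j : Fin n, (fun m => (G m)^2) (j:ℕ) :=
            Finset.sum_congr rfl fun j _ => h1 j
        _ = (∑ i : Fin (n-1), (G (i:ℕ))^2) + (G (n-1))^2 := by simpa using hsplit (fun m => (G m)^2)
        _ = Ssum + (1 - Ssum) := by
            congr 1
            · rw [hSsum]
              apply Finset.sum_congr rfl
              intro i _
              rw [hG]
              simp only [i.2, dif_pos]
            · simp only [hG, dif_neg (lt_irrefl (n-1))]
              rw [← hGsq]
        _ = 1 := by ring
    have hx_norm : ‖x‖ = 1 := by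
      rw [EuclideanSpace.norm_eq]
      have heq : ∑ i : Fin n, ‖x i‖^2 = 1 := by
        rw [← hsum_x]
        exact Finset.sum_congr rfl fun i _ => by rw [Real.norm_eq_abs, sq_abs]
      rw [heq, Real.sqrt_one]
    have hx_sphere : x ∈ sphere (0 : En n) 1 := by
      simpa [mem_sphere_zero_iff_norm] using hx_norm
    have hx_ball : x ∈ closedBall θone r := by
      rw [mem_closedBall, dist_eq_norm]
      have happly : ∀ j : Fin n, (x - θone) j
          = (fun m => G m - (if m = n - 1 then (1:ℝ) else 0)) (j:ℕ) := by
        intro j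
        rw [PiLp.sub_apply, hx_apply, hθone, EuclideanSpace.single_apply]
        congr 2
        by_cases hj : j = i0
        · subst hj; simp [hi0]
        · have hiff : ((j:ℕ) = n - 1) ↔ False := by
            constructor
            · intro hjj
              exact hj (Fin.ext (by simp [hi0, hjj]))
            · exact False.elim
          simp [hj, hiff]
      have hsum2 : ∑ j : Fin n, ‖(x - θone) j‖^2
          = Ssum + (Real.sqrt (1 - Ssum) - 1)^2 := by
        calc ∑ j : Fin n, ‖(x - θone) j‖^2
            = ∑ j : Fin n, (fun m => (G m - (if m = n - 1 then (1:ℝ) else 0))^2) (j:ℕ) := by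
              apply Finset.sum_congr rfl
              intro j _
              rw [Real.norm_eq_abs, sq_abs, happly j]
          _ = (∑ i : Fin (n-1), (G (i:ℕ) - (if (i:ℕ) = n - 1 then (1:ℝ) else 0))^2)
              + (G (n-1) - (if n - 1 = n - 1 then (1:ℝ) else 0))^2 := by
                simpa using hsplit (fun m => (G m - (if m = n - 1 then (1:ℝ) else 0))^2)
          _ = Ssum + (Real.sqrt (1 - Ssum) - 1)^2 := by
              congr 1
              · rw [hSsum]
                apply Finset.sum_congr rfl
                intro i _
                have h1 : ((i:ℕ) = n - 1) ↔ False :=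
                  ⟨fun h => absurd h (by omega), False.elim⟩
                have h2 : (i:ℕ) < n - 1 := i.2
                rw [hG]
                simp [h1, h2]
              · rw [hG]
                simp
      have hsqrt_ge : 1 - Ssum ≤ Real.sqrt (1 - Ssum) := by
        have h1 : (1 - Ssum)^2 ≤ 1 - Ssum := by nlinarith [hSnonneg, hShalf]
        calc 1 - Ssum = Real.sqrt ((1-Ssum)^2) := (Real.sqrt_sq (by linarith)).symm
          _ ≤ Real.sqrt (1 - Ssum) := Real.sqrt_le_sqrt h1
      have hsqrt_le : Real.sqrt (1 - Ssum) ≤ 1 := by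
        have h := Real.sqrt_le_sqrt (show 1 - Ssum ≤ 1 by linarith)
        rwa [Real.sqrt_one] at h
      have hbound : Ssum + (Real.sqrt (1 - Ssum) - 1)^2 ≤ r^2 := by
        have h1 : (Real.sqrt (1 - Ssum) - 1)^2 ≤ Ssum^2 := by nlinarith
        nlinarith
      rw [EuclideanSpace.norm_eq, hsum2]
      calc Real.sqrt (Ssum + (Real.sqrt (1 - Ssum) - 1)^2)
          ≤ Real.sqrt (r^2) := Real.sqrt_le_sqrt hbound
        _ = r := Real.sqrt_sq (le_of_lt hrpos)
    refine ⟨x, ⟨hx_sphere, hx_ball⟩, ?_⟩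
    funext i
    rw [hF]
    simp only
    rw [hx_apply, hG]
    have h2 : ((Fin.castLE (Nat.sub_le n 1) i : Fin n) : ℕ) = (i : ℕ) := rfl
    rw [h2]
    simp only [i.2, dif_pos]
  have hμpi : (μH[(n:ℝ)-1] : Measure (Fin (n-1) → ℝ)) = volume := by
    rw [hcard]
    exact MeasureTheory.hausdorffMeasure_pi_real
  calc min (volume (closedBall (0 : Fin (n-1) → ℝ) ρ)) 1
      ≤ volume (closedBall (0 : Fin (n-1) → ℝ) ρ) := min_le_left _ _
    _ = μH[(n:ℝ)-1] (closedBall (0 : Fin (n-1) → ℝ) ρ) := by rw [hμpi]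
    _ ≤ μH[(n:ℝ)-1] (F '' (sphere (0 : En n) 1 ∩ closedBall θone r)) := measure_mono hsub1
    _ ≤ (1:NNReal) ^ ((n:ℝ)-1) * μH[(n:ℝ)-1] (sphere (0 : En n) 1 ∩ closedBall θone r) :=
        hFlip.hausdorffMeasure_image_le hd0 _
    _ = μH[(n:ℝ)-1] (sphere (0 : En n) 1 ∩ closedBall θone r) := by
        simp [ENNReal.one_rpow]

lemma cap_transfer (n : ℕ) (hd0 : (0:ℝ) ≤ (n:ℝ) - 1) (θone θc : En n)
    (h1 : ‖θone‖ = 1) (hc : ‖θc‖ = 1) (r : ℝ) :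
    μH[(n:ℝ)-1] (sphere (0 : En n) 1 ∩ closedBall θone r)
      = μH[(n:ℝ)-1] (sphere (0 : En n) 1 ∩ closedBall θc r) := by
  set g := Submodule.reflection (ℝ ∙ (θone - θc))ᗮ with hg
  have hgθ : g θone = θc := Submodule.reflection_sub (by rw [h1, hc])
  have himg : ⇑g '' (sphere (0 : En n) 1 ∩ closedBall θone r)
      = sphere (0 : En n) 1 ∩ closedBall θc r := by
    rw [Set.image_eq_preimage_of_inverse g.symm_apply_apply g.apply_symm_apply]
    rw [Set.preimage_inter]
    congr 1
    · calc ⇑g.symm ⁻¹' sphere (0 : En n) 1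
          = ⇑g.symm ⁻¹' sphere (g.symm 0) 1 := by rw [map_zero]
        _ = sphere (0 : En n) 1 := g.symm.isometry.preimage_sphere 0 1
    · have hθ1 : θone = g.symm θc := by rw [← hgθ, g.symm_apply_apply]
      calc ⇑g.symm ⁻¹' closedBall θone r
          = ⇑g.symm ⁻¹' closedBall (g.symm θc) r := by rw [← hθ1]
        _ = closedBall θc r := g.symm.isometry.preimage_closedBall θc r
  rw [← himg, g.isometry.hausdorffMeasure_image (Or.inl hd0)]

set_option maxHeartbeats 1000000 in
/-- A spherical harmonic takes its big values on a big piece of the sphere. -/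
theorem spherical_harmonic_big_piece (n k : ℕ) (hn : 2 ≤ n) (hk : 1 ≤ k) :
    ∃ l : ℝ, 0 < l ∧
      ∀ p : MvPolynomial (Fin n) ℝ, IsHarmonicPoly n p → MvPolynomial.IsHomogeneous p k →
        ENNReal.ofReal l ≤
          sphMeasure n {θ : En n | θ ∈ sphere (0 : En n) 1 ∧
            supSphere n p / 2 ≤ |evalP n p θ|} := by
  classical
  have hd0 : (0:ℝ) ≤ (n:ℝ) - 1 := by
    have : (2:ℝ) ≤ (n:ℝ) := by exact_mod_cast hn
    linarith
  set i0 : Fin n := ⟨n - 1, by omega⟩ with hi0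
  set θone : En n := EuclideanSpace.single i0 (1:ℝ) with hθone
  have hθone_norm : ‖θone‖ = 1 := by
    rw [hθone, EuclideanSpace.norm_single]; norm_num
  have hθone_mem : θone ∈ sphere (0 : En n) 1 := by
    simpa [mem_sphere_zero_iff_norm] using hθone_norm
  set S := sphere (0 : En n) 1 with hSdef
  haveI : Nonempty ↥S := ⟨⟨θone, hθone_mem⟩⟩
  -- the evaluation linear map
  let E : MvPolynomial.restrictTotalDegree (Fin n) ℝ k →ₗ[ℝ] C(↥S, ℝ) :=
    { toFun := fun q => ⟨fun θ => evalP n q.1 θ.1,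
        (continuous_evalP n q.1).comp continuous_subtype_val⟩
      map_add' := fun q1 q2 => by
        ext θ; simp [evalP]
      map_smul' := fun c q => by
        ext θ; simp [evalP, MvPolynomial.smul_eval] }
  set V := LinearMap.range E with hV
  haveI : FiniteDimensional ℝ (MvPolynomial.restrictTotalDegree (Fin n) ℝ k) :=
    inferInstance
  haveI : FiniteDimensional ℝ ↥V := inferInstance
  -- uniform equicontinuity on the unit sphere of V
  obtain ⟨δ, δpos, hδ⟩ : ∃ δ, 0 < δ ∧ ∀ w : ↥V, ‖w‖ = 1 → ∀ θ θ' : ↥S,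
      dist θ θ' < δ → |(w : C(↥S,ℝ)) θ - (w : C(↥S,ℝ)) θ'| < 1/2 := by
    set U : Set (C(↥S,ℝ) × ↥S × ↥S) := {q | |q.1 q.2.1 - q.1 q.2.2| < 1/2} with hU
    have hUopen : IsOpen U := by
      have h1 : Continuous fun q : C(↥S,ℝ) × ↥S × ↥S => q.1 q.2.1 :=
        continuous_eval.comp (continuous_fst.prodMk (continuous_fst.comp continuous_snd))
      have h2 : Continuous fun q : C(↥S,ℝ) × ↥S × ↥S => q.1 q.2.2 :=
        continuous_eval.comp (continuous_fst.prodMk (continuous_snd.comp continuous_snd))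
      exact isOpen_lt ((h1.sub h2).abs) continuous_const
    set K : Set (C(↥S,ℝ) × ↥S × ↥S) :=
      (fun q : ↥V × ↥S => ((q.1 : C(↥S,ℝ)), q.2, q.2)) ''
        (sphere (0:↥V) 1 ×ˢ Set.univ) with hK
    have hKcompact : IsCompact K :=
      ((isCompact_sphere _ _).prod isCompact_univ).image
        ((continuous_subtype_val.comp continuous_fst).prodMk
          (continuous_snd.prodMk continuous_snd))
    have hKU : K ⊆ U := by
      rintro _ ⟨⟨w, θ⟩, -, rfl⟩
      simp [hU]
    obtain ⟨δ, δpos, hsub⟩ := hKcompact.exists_thickening_subset_open hUopen hKU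
    refine ⟨δ, δpos, fun w hw θ θ' hdist => ?_⟩
    have hmem : ((w : C(↥S,ℝ)), θ, θ') ∈ Metric.thickening δ K := by
      rw [Metric.mem_thickening_iff]
      refine ⟨((w : C(↥S,ℝ)), θ, θ), ⟨(w, θ),
        ⟨by simpa [mem_sphere_zero_iff_norm] using hw, Set.mem_univ _⟩, rfl⟩, ?_⟩
      rw [Prod.dist_eq, Prod.dist_eq]
      simp only [dist_self]
      exact max_lt δpos (max_lt δpos (by rwa [dist_comm]))
    exact hsub hmem
  -- radius of the cap
  set r : ℝ := min (δ/2) (1/2) with hr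
  have hrpos : 0 < r := lt_min (by linarith) (by norm_num)
  have hrle : r ≤ 1/2 := min_le_right _ _
  have hrltδ : r < δ := lt_of_le_of_lt (min_le_left _ _) (by linarith)
  set ρ : ℝ := r / (2 * n) with hρ
  have hρpos : 0 < ρ := by
    apply div_pos hrpos
    have hnpos : (0:ℝ) < (n:ℝ) := by exact_mod_cast (by omega : 0 < n)
    positivity
  set L : ENNReal := min (volume (closedBall (0 : Fin (n-1) → ℝ) ρ)) 1 with hL
  have hcapone : L ≤ μH[(n:ℝ)-1] (S ∩ closedBall θone r) := by
    rw [hSdef, hθone, hi0, hL, hρ]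
    exact cap_lower_bound n hn r hrpos hrle
  have hLpos : 0 < L := lt_min (measure_closedBall_pos volume _ hρpos) one_pos
  have hLne : L ≠ ⊤ := ne_top_of_le_ne_top ENNReal.one_ne_top (min_le_right _ _)
  refine ⟨L.toReal, ENNReal.toReal_pos (ne_of_gt hLpos) hLne, ?_⟩
  intro p hharm hhom
  rw [show ENNReal.ofReal L.toReal = L from ENNReal.ofReal_toReal hLne]
  have hmem : p ∈ MvPolynomial.restrictTotalDegree (Fin n) ℝ k :=
    (MvPolynomial.mem_restrictTotalDegree _ _ _).mpr hhom.totalDegree_le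
  set v0 : C(↥S, ℝ) := E ⟨p, hmem⟩ with hv0
  have hv0_apply : ∀ θ : ↥S, v0 θ = evalP n p θ.1 := fun θ => rfl
  have hbdd : ∀ θ ∈ S, |evalP n p θ| ≤ ‖v0‖ := by
    intro θ hθ
    have := v0.norm_coe_le_norm ⟨θ, hθ⟩
    simpa [Real.norm_eq_abs, hv0_apply] using this
  have hBdd : BddAbove ((fun θ => |evalP n p θ|) '' S) := by
    refine ⟨‖v0‖, ?_⟩
    rintro a ⟨θ, hθ, rfl⟩
    exact hbdd θ hθ
  have hs_nonneg : 0 ≤ supSphere n p := by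
    have h1 : |evalP n p θone| ∈ (fun θ => |evalP n p θ|) '' S := ⟨θone, hθone_mem, rfl⟩
    exact le_trans (abs_nonneg _) (le_csSup hBdd h1)
  have hsupge : ∀ θ ∈ S, |evalP n p θ| ≤ supSphere n p := by
    intro θ hθ
    exact le_csSup hBdd ⟨θ, hθ, rfl⟩
  have hsnorm : supSphere n p = ‖v0‖ := by
    apply le_antisymm
    · have hne : ((fun θ => |evalP n p θ|) '' sphere (0 : En n) 1).Nonempty :=
        ⟨|evalP n p θone|, θone, hθone_mem, rfl⟩
      exact csSup_le hne (by rintro a ⟨θ, hθ, rfl⟩; exact hbdd θ hθ)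
    · rw [ContinuousMap.norm_le _ hs_nonneg]
      intro θ
      simpa [Real.norm_eq_abs, hv0_apply] using hsupge θ.1 θ.2
  rcases eq_or_lt_of_le hs_nonneg with hs0 | hspos
  · -- degenerate case : sup is zero
    calc L ≤ μH[(n:ℝ)-1] (S ∩ closedBall θone r) := hcapone
      _ ≤ sphMeasure n {θ : En n | θ ∈ sphere (0 : En n) 1 ∧
            supSphere n p / 2 ≤ |evalP n p θ|} := by
          rw [sphMeasure]
          apply measure_mono
          rintro θ ⟨hθ1, _⟩
          exact ⟨hθ1, by rw [← hs0]; simpa using abs_nonneg (evalP n p θ)⟩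
  · -- main case
    obtain ⟨θ0, -, hθ0max⟩ := isCompact_univ.exists_isMaxOn Set.univ_nonempty
      ((map_continuous v0).abs.continuousOn (s := Set.univ))
    have hmax : ∀ θ : ↥S, |v0 θ| ≤ |v0 θ0| := fun θ => hθ0max (Set.mem_univ θ)
    have hv0θ0 : supSphere n p ≤ |v0 θ0| := by
      rw [hsnorm]
      rw [ContinuousMap.norm_le _ (abs_nonneg _)]
      intro θ
      simpa [Real.norm_eq_abs] using hmax θ
    set wV : ↥V := ⟨v0, LinearMap.mem_range_self E ⟨p, hmem⟩⟩ with hwV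
    have hwVnorm : ‖wV‖ = supSphere n p := by
      rw [hsnorm]; rfl
    set w : ↥V := (supSphere n p)⁻¹ • wV with hw
    have hw1 : ‖w‖ = 1 := by
      have h : ‖(supSphere n p)⁻¹ • wV‖ = ‖(supSphere n p)⁻¹‖ * ‖wV‖ :=
        norm_smul ((supSphere n p)⁻¹) (wV : C(↥S, ℝ))
      rw [hw, h, hwVnorm, Real.norm_eq_abs,
        abs_of_pos (inv_pos.2 hspos), inv_mul_cancel₀ (ne_of_gt hspos)]
    have hwcoe : (w : C(↥S,ℝ)) = (supSphere n p)⁻¹ • v0 := by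
      rw [hw]; rfl
    have hincl : S ∩ closedBall (θ0 : En n) r ⊆ {θ : En n | θ ∈ sphere (0 : En n) 1 ∧
        supSphere n p / 2 ≤ |evalP n p θ|} := by
      rintro θ ⟨hθS, hθB⟩
      refine ⟨hθS, ?_⟩
      have hdist : dist (⟨θ, hθS⟩ : ↥S) θ0 < δ := by
        have h1 : dist θ (θ0 : En n) ≤ r := mem_closedBall.1 hθB
        calc dist (⟨θ, hθS⟩ : ↥S) θ0 = dist θ (θ0 : En n) := rfl
          _ ≤ r := h1
          _ < δ := hrltδ
      have h2 := hδ w hw1 ⟨θ, hθS⟩ θ0 hdist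
      rw [hwcoe] at h2
      simp only [ContinuousMap.smul_apply, smul_eq_mul] at h2
      rw [← mul_sub, abs_mul, abs_of_pos (inv_pos.2 hspos)] at h2
      have h3 : |v0 ⟨θ, hθS⟩ - v0 θ0| < supSphere n p / 2 := by
        have h4 := mul_lt_mul_of_pos_left h2 hspos
        rw [← mul_assoc, mul_inv_cancel₀ (ne_of_gt hspos), one_mul] at h4
        linarith
      have h5 : |v0 θ0| - |v0 ⟨θ, hθS⟩| ≤ |v0 θ0 - v0 ⟨θ, hθS⟩| :=
        abs_sub_abs_le_abs_sub _ _
      rw [abs_sub_comm] at h3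
      have h6 : supSphere n p / 2 ≤ |v0 ⟨θ, hθS⟩| := by linarith
      rwa [hv0_apply] at h6
    calc L ≤ μH[(n:ℝ)-1] (S ∩ closedBall θone r) := hcapone
      _ = μH[(n:ℝ)-1] (S ∩ closedBall (θ0 : En n) r) := by
          refine cap_transfer n hd0 θone _ hθone_norm ?_ r
          exact mem_sphere_zero_iff_norm.mp θ0.2
      _ ≤ sphMeasure n {θ : En n | θ ∈ sphere (0 : En n) 1 ∧
            supSphere n p / 2 ≤ |evalP n p θ|} := by
          rw [sphMeasure]
          exact measure_mono hincl

end
end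

section
/- Let n ≥ 2 and k ≥ 1, and let h(x) = Σ_{|α|=k} c_α x^α be a homogeneous harmonic polynomial of degree k on ℝⁿ. Then for every multi-index α with |α| = k, |c_α| ≤ (2^{n+2} n k)^k · ‖h‖_{L∞(S^{n−1})}. -/
open MeasureTheory Metric Filter Topology

noncomputable section

/-- Alternating binomial sum of powers: the `a`-th finite difference of `g ↦ g^b`. -/

lemma key1 : ∀ a : ℕ, ∀ b : ℕ, b ≤ a →
    (∑ g ∈ Finset.range (a+1), (-1:ℝ)^g * ((a.choose g : ℕ) : ℝ) * (g:ℝ)^b)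
      = if b = a then (-1:ℝ)^a * (a.factorial : ℝ) else 0 := by
  intro a
  induction a with
  | zero =>
    intro b hb
    interval_cases b
    simp
  | succ a ih =>
    intro b hb
    have hU : (∑ g ∈ Finset.range (a+1),
          (-1:ℝ)^(g+1) * ((a.choose (g+1) : ℕ) : ℝ) * ((g+1:ℕ):ℝ)^b)
        = (∑ g ∈ Finset.range (a+1), (-1:ℝ)^g * ((a.choose g : ℕ) : ℝ) * (g:ℝ)^b)
          - (0:ℝ)^b := by
      have h3 : (∑ g ∈ Finset.range (a+2), (-1:ℝ)^g * ((a.choose g : ℕ) : ℝ) * (g:ℝ)^b)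
          = (∑ g ∈ Finset.range (a+1),
              (-1:ℝ)^(g+1) * ((a.choose (g+1) : ℕ) : ℝ) * ((g+1:ℕ):ℝ)^b)
            + (-1:ℝ)^0 * ((a.choose 0 : ℕ) : ℝ) * ((0:ℕ):ℝ)^b :=
        Finset.sum_range_succ' _ _
      have h4 : (∑ g ∈ Finset.range (a+2), (-1:ℝ)^g * ((a.choose g : ℕ) : ℝ) * (g:ℝ)^b)
          = (∑ g ∈ Finset.range (a+1), (-1:ℝ)^g * ((a.choose g : ℕ) : ℝ) * (g:ℝ)^b) := by
        rw [Finset.sum_range_succ]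
        simp [Nat.choose_succ_self]
      rw [h4] at h3
      simp only [pow_zero, Nat.choose_zero_right, Nat.cast_one, Nat.cast_zero, one_mul] at h3
      linarith [h3]
    have step : (∑ g ∈ Finset.range (a+2), (-1:ℝ)^g * (((a+1).choose g : ℕ) : ℝ) * (g:ℝ)^b)
        = (∑ g ∈ Finset.range (a+1), (-1:ℝ)^g * ((a.choose g : ℕ) : ℝ)
            * ((g:ℝ)^b - ((g:ℝ)+1)^b)) := by
      rw [Finset.sum_range_succ' (fun g => (-1:ℝ)^g * (((a+1).choose g : ℕ) : ℝ) * (g:ℝ)^b)]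
      have h1 : ∀ g ∈ Finset.range (a+1),
          (-1:ℝ)^(g+1) * (((a+1).choose (g+1) : ℕ) : ℝ) * ((g+1:ℕ):ℝ)^b
          = -((-1:ℝ)^g * ((a.choose g : ℕ) : ℝ) * (((g:ℝ)+1))^b)
            + ((-1:ℝ)^(g+1) * ((a.choose (g+1) : ℕ) : ℝ) * (((g+1:ℕ):ℝ))^b) := by
        intro g _
        rw [Nat.choose_succ_succ]
        push_cast
        ring
      rw [Finset.sum_congr rfl h1, Finset.sum_add_distrib, hU]
      have hrhs : (∑ g ∈ Finset.range (a+1), (-1:ℝ)^g * ((a.choose g : ℕ) : ℝ)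
            * ((g:ℝ)^b - ((g:ℝ)+1)^b))
          = (∑ g ∈ Finset.range (a+1), (-1:ℝ)^g * ((a.choose g : ℕ) : ℝ) * (g:ℝ)^b)
            - (∑ g ∈ Finset.range (a+1), (-1:ℝ)^g * ((a.choose g : ℕ) : ℝ) * ((g:ℝ)+1)^b) := by
        rw [← Finset.sum_sub_distrib]
        exact Finset.sum_congr rfl (fun g _ => by ring)
      rw [hrhs, Finset.sum_neg_distrib]
      simp only [pow_zero, Nat.choose_zero_right, Nat.cast_one, Nat.cast_zero, one_mul]
      ring
    rw [step]
    have hexp : ∀ g ∈ Finset.range (a+1),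
        (-1:ℝ)^g * ((a.choose g : ℕ) : ℝ) * ((g:ℝ)^b - ((g:ℝ)+1)^b)
        = ∑ j ∈ Finset.range b,
            -(((b.choose j : ℕ) : ℝ) * ((-1:ℝ)^g * ((a.choose g : ℕ) : ℝ) * (g:ℝ)^j)) := by
      intro g _
      have hb1 : ((g:ℝ)+1)^b = ∑ j ∈ Finset.range (b+1), (g:ℝ)^j * ((b.choose j : ℕ) : ℝ) := by
        have := add_pow (g:ℝ) 1 b
        simp only [one_pow, mul_one] at this
        exact this
      rw [hb1, Finset.sum_range_succ]
      simp only [Nat.choose_self, Nat.cast_one, mul_one]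
      have h7 : ((g:ℝ)^b - ((∑ j ∈ Finset.range b, (g:ℝ)^j * ((b.choose j : ℕ) : ℝ)) + (g:ℝ)^b))
          = -∑ j ∈ Finset.range b, (g:ℝ)^j * ((b.choose j : ℕ) : ℝ) := by ring
      rw [h7, mul_neg, Finset.mul_sum, ← Finset.sum_neg_distrib]
      exact Finset.sum_congr rfl (fun j _ => by ring)
    rw [Finset.sum_congr rfl hexp, Finset.sum_comm]
    have hinner : ∀ j ∈ Finset.range b,
        (∑ g ∈ Finset.range (a+1),
          -(((b.choose j : ℕ) : ℝ) * ((-1:ℝ)^g * ((a.choose g : ℕ) : ℝ) * (g:ℝ)^j)))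
        = -(((b.choose j : ℕ) : ℝ) * (if j = a then (-1:ℝ)^a * (a.factorial : ℝ) else 0)) := by
      intro j hj
      rw [Finset.sum_neg_distrib, ← Finset.mul_sum]
      have hja : j ≤ a := by
        have := Finset.mem_range.1 hj
        omega
      rw [ih j hja]
    rw [Finset.sum_congr rfl hinner]
    by_cases hba : b = a + 1
    · subst hba
      rw [Finset.sum_eq_single a]
      · simp [Nat.choose_succ_self_right, Nat.factorial_succ]
        push_cast
        ring
      · intro j _ hja
        simp [hja]
      · intro h
        exact absurd (Finset.self_mem_range_succ a) h
    · rw [if_neg hba]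
      apply Finset.sum_eq_zero
      intro j hj
      have : j ≠ a := by
        have := Finset.mem_range.1 hj
        omega
      simp [this]


/-- Coefficient bound for homogeneous harmonic polynomials in terms of the
sup norm on the unit sphere. -/
theorem coefficient_bound (n k : ℕ) (hn : 2 ≤ n) (hk : 1 ≤ k)
    (p : MvPolynomial (Fin n) ℝ) (hharm : IsHarmonicPoly n p)
    (hhom : MvPolynomial.IsHomogeneous p k) :
    ∀ α : Fin n →₀ ℕ, (α.sum fun _ m => m) = k →
      |MvPolynomial.coeff α p| ≤ ((2 ^ (n + 2) * n * k : ℕ) : ℝ) ^ k * supSphere n p := by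
  intro α hα
  have hk0 : (0:ℝ) < (k:ℝ) := by exact_mod_cast hk
  set K := supSphere n p with hK
  -- degree facts
  have hdegsup : ∀ d ∈ p.support, ∑ i, d i = k := by
    intro d hd
    have h1 := hhom (MvPolynomial.mem_support_iff.1 hd)
    replace h1 : Finsupp.degree d = k := by rw [Finsupp.degree_eq_weight_one]; exact h1
    rw [← h1, Finsupp.degree]
    exact (Finset.sum_subset (Finset.subset_univ _)
      (fun i _ hi => Finsupp.notMem_support_iff.1 hi)).symm
  have hsumα : ∑ i, α i = k := by
    rw [← hα, Finsupp.sum]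
    exact (Finset.sum_subset (Finset.subset_univ _)
      (fun i _ hi => Finsupp.notMem_support_iff.1 hi)).symm
  -- continuity of evaluation
  have hcont : Continuous fun x : En n => evalP n p x :=
    (MvPolynomial.continuous_eval p).comp (continuous_pi fun i => (continuous_apply i).comp (PiLp.continuous_ofLp 2 _))
  -- supSphere facts
  have hsph_ne : (sphere (0 : En n) 1).Nonempty := by
    refine ⟨EuclideanSpace.single (⟨0, by omega⟩ : Fin n) 1, ?_⟩
    simp [EuclideanSpace.norm_single]
  have hbdd : BddAbove ((fun θ => |evalP n p θ|) '' sphere (0 : En n) 1) :=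
    ((isCompact_sphere (0 : En n) 1).image (continuous_abs.comp hcont)).bddAbove
  have hKbound : ∀ θ ∈ sphere (0 : En n) 1, |evalP n p θ| ≤ K :=
    fun θ hθ => le_csSup hbdd ⟨θ, hθ, rfl⟩
  have hKnonneg : 0 ≤ K := by
    obtain ⟨θ, hθ⟩ := hsph_ne
    exact le_trans (abs_nonneg _) (hKbound θ hθ)
  -- scaling of homogeneous polynomials
  have hscale : ∀ (c : ℝ) (y : En n), evalP n p (c • y) = c ^ k * evalP n p y := by
    intro c y
    unfold evalP
    rw [MvPolynomial.eval_eq', MvPolynomial.eval_eq', Finset.mul_sum]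
    refine Finset.sum_congr rfl fun d hd => ?_
    have h2 : ∀ i, (c • y) i = c * y i := fun i => rfl
    simp only [h2]
    have h3 : (∏ i, (c * y i) ^ d i) = (∏ i, c ^ d i) * ∏ i, (y i) ^ d i := by
      rw [← Finset.prod_mul_distrib]
      exact Finset.prod_congr rfl fun i _ => mul_pow _ _ _
    rw [h3, Finset.prod_pow_eq_pow_sum, hdegsup d hd]
    ring
  -- bound on the ball
  have hball : ∀ x : En n, ‖x‖ ≤ 1 → |evalP n p x| ≤ K := by
    intro x hx
    rcases eq_or_ne x 0 with hx0 | hx0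
    · subst hx0
      have hz : evalP n p 0 = 0 := by
        unfold evalP
        have : (fun i => (0 : En n) i) = (fun _ => (0:ℝ)) := by funext i; rfl
        rw [this, MvPolynomial.eval_zero']
        have : Finsupp.degree (0 : Fin n →₀ ℕ) ≠ k := by
          rw [map_zero]; omega
        exact hhom.coeff_eq_zero this
      rw [hz, abs_zero]; exact hKnonneg
    · have hnx : 0 < ‖x‖ := norm_pos_iff.2 hx0
      have hθ : ‖x‖⁻¹ • x ∈ sphere (0 : En n) 1 := by
        simp [norm_smul, abs_of_pos (inv_pos.2 hnx), inv_mul_cancel₀ hnx.ne']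
      have hxe : x = ‖x‖ • (‖x‖⁻¹ • x) := by
        rw [smul_smul, mul_inv_cancel₀ hnx.ne', one_smul]
      calc |evalP n p x| = ‖x‖ ^ k * |evalP n p (‖x‖⁻¹ • x)| := by
            rw [hxe, hscale]
            rw [abs_mul, abs_pow, abs_of_pos hnx, ← hxe]
        _ ≤ 1 * K := by
            apply mul_le_mul _ (hKbound _ hθ) (abs_nonneg _) zero_le_one
            exact pow_le_one₀ (norm_nonneg x) hx
        _ = K := one_mul K
  -- the grid
  set P := Fintype.piFinset (fun i : Fin n => Finset.range (α i + 1)) with hP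
  have hγle : ∀ γ ∈ P, ∀ i, γ i ≤ α i := by
    intro γ hγ i
    exact Nat.lt_succ_iff.1 (Finset.mem_range.1 (Fintype.mem_piFinset.1 hγ i))
  -- the grid points
  let xpt : (Fin n → ℕ) → En n := fun γ => WithLp.toLp 2 (fun i => (γ i : ℝ) / k)
  have hxnorm : ∀ γ ∈ P, ‖xpt γ‖ ≤ 1 := by
    intro γ hγ
    have hne : ‖xpt γ‖ = Real.sqrt (∑ i, (xpt γ i) ^ 2) := by
      rw [EuclideanSpace.norm_eq]
      simp [Real.norm_eq_abs, sq_abs]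
    rw [hne, show (1:ℝ) = Real.sqrt 1 by rw [Real.sqrt_one]]
    apply Real.sqrt_le_sqrt
    have h1 : ∑ i, ((γ i:ℝ))^2 ≤ ((k:ℝ))^2 := by
      calc ∑ i, ((γ i:ℝ))^2 ≤ (∑ i, (γ i:ℝ))^2 :=
            Finset.sum_sq_le_sq_sum_of_nonneg (fun i _ => by positivity)
        _ ≤ ((k:ℝ))^2 := by
            apply pow_le_pow_left₀ (by positivity)
            have : (∑ i, γ i : ℕ) ≤ k := by
              rw [← hsumα]
              exact Finset.sum_le_sum fun i _ => hγle γ hγ i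
            exact_mod_cast this
    have h2 : ∑ i, (xpt γ i) ^ 2 = (∑ i, ((γ i:ℝ))^2) / (k:ℝ)^2 := by
      rw [Finset.sum_div]
      exact Finset.sum_congr rfl fun i _ => by
        show ((γ i : ℝ) / k) ^ 2 = _
        rw [div_pow]
    rw [h2, div_le_one (by positivity)]
    exact h1
  -- the weighted sum
  set S := ∑ γ ∈ P, (∏ i, ((-1:ℝ)^(γ i) * (((α i).choose (γ i) : ℕ) : ℝ))) * evalP n p (xpt γ)
    with hSdef
  -- main identity
  have hev : ∀ γ : Fin n → ℕ, evalP n p (xpt γ)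
      = ∑ β ∈ p.support, MvPolynomial.coeff β p * ∏ i, ((γ i : ℝ)/k) ^ (β i) := by
    intro γ
    unfold evalP
    rw [MvPolynomial.eval_eq']
  have hS : S = MvPolynomial.coeff α p * ((k:ℝ)⁻¹)^k
      * ((-1:ℝ)^k * ∏ i, (((α i).factorial : ℕ) : ℝ)) := by
    rw [hSdef]
    have hterm : ∀ γ ∈ P,
        (∏ i, ((-1:ℝ)^(γ i) * (((α i).choose (γ i) : ℕ) : ℝ))) * evalP n p (xpt γ)
        = ∑ β ∈ p.support, MvPolynomial.coeff β p * ((k:ℝ)⁻¹)^k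
            * ∏ i, ((-1:ℝ)^(γ i) * (((α i).choose (γ i) : ℕ) : ℝ) * ((γ i:ℝ))^(β i)) := by
      intro γ hγ
      rw [hev γ, Finset.mul_sum]
      refine Finset.sum_congr rfl fun β hβ => ?_
      have hβdeg : ∑ i, β i = k := hdegsup β hβ
      have h4 : (∏ i, ((γ i : ℝ)/k) ^ (β i))
          = ((k:ℝ)⁻¹)^k * ∏ i, ((γ i:ℝ))^(β i) := by
        have : ∀ i, ((γ i : ℝ)/k) ^ (β i) = ((k:ℝ)⁻¹)^(β i) * ((γ i:ℝ))^(β i) := by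
          intro i
          rw [div_eq_inv_mul, mul_pow]
        rw [Finset.prod_congr rfl fun i _ => this i, Finset.prod_mul_distrib,
          Finset.prod_pow_eq_pow_sum, hβdeg]
      rw [h4]
      rw [show (∏ i, ((-1:ℝ)^(γ i) * (((α i).choose (γ i) : ℕ) : ℝ) * ((γ i:ℝ))^(β i)))
          = (∏ i, ((-1:ℝ)^(γ i) * (((α i).choose (γ i) : ℕ) : ℝ))) * ∏ i, ((γ i:ℝ))^(β i) from by
        rw [← Finset.prod_mul_distrib]]
      ring
    rw [Finset.sum_congr rfl hterm, Finset.sum_comm]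
    have hinner : ∀ β ∈ p.support,
        (∑ γ ∈ P, MvPolynomial.coeff β p * ((k:ℝ)⁻¹)^k
            * ∏ i, ((-1:ℝ)^(γ i) * (((α i).choose (γ i) : ℕ) : ℝ) * ((γ i:ℝ))^(β i)))
        = MvPolynomial.coeff β p * ((k:ℝ)⁻¹)^k
            * ∏ i, (∑ g ∈ Finset.range (α i + 1),
                (-1:ℝ)^g * (((α i).choose g : ℕ) : ℝ) * ((g:ℕ):ℝ)^(β i)) := by
      intro β hβ
      rw [← Finset.mul_sum, Finset.prod_univ_sum]
    rw [Finset.sum_congr rfl hinner]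
    rw [Finset.sum_eq_single α]
    · congr 1
      have : ∀ i ∈ Finset.univ, (∑ g ∈ Finset.range (α i + 1),
          (-1:ℝ)^g * (((α i).choose g : ℕ) : ℝ) * ((g:ℕ):ℝ)^(α i))
          = (-1:ℝ)^(α i) * (((α i).factorial : ℕ) : ℝ) := by
        intro i _
        rw [key1 (α i) (α i) le_rfl, if_pos rfl]
      rw [Finset.prod_congr rfl this, Finset.prod_mul_distrib,
        Finset.prod_pow_eq_pow_sum, hsumα]
    · intro β hβ hβα
      have hex : ∃ i, β i < α i := by
        by_contra hno
        push_neg at hno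
        have hs : ∑ i, α i = ∑ i, β i := by rw [hsumα, hdegsup β hβ]
        have := (Finset.sum_eq_sum_iff_of_le (fun i _ => hno i)).1 hs
        exact hβα (Finsupp.ext fun i => ((this i (Finset.mem_univ i))).symm)
      obtain ⟨i0, hi0⟩ := hex
      have hz : (∏ i, (∑ g ∈ Finset.range (α i + 1),
          (-1:ℝ)^g * (((α i).choose g : ℕ) : ℝ) * ((g:ℕ):ℝ)^(β i))) = 0 := by
        apply Finset.prod_eq_zero (Finset.mem_univ i0)
        rw [key1 (α i0) (β i0) (le_of_lt hi0), if_neg (ne_of_lt hi0)]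
      rw [hz, mul_zero]
    · intro hαs
      rw [MvPolynomial.notMem_support_iff.1 hαs]
      ring
  -- the upper bound on |S|
  have hSbound : |S| ≤ K * 2^k := by
    rw [hSdef]
    calc |∑ γ ∈ P, (∏ i, ((-1:ℝ)^(γ i) * (((α i).choose (γ i) : ℕ) : ℝ))) * evalP n p (xpt γ)|
        ≤ ∑ γ ∈ P, |(∏ i, ((-1:ℝ)^(γ i) * (((α i).choose (γ i) : ℕ) : ℝ))) * evalP n p (xpt γ)| :=
          Finset.abs_sum_le_sum_abs _ _
      _ ≤ ∑ γ ∈ P, (∏ i, (((α i).choose (γ i) : ℕ) : ℝ)) * K := by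
          refine Finset.sum_le_sum fun γ hγ => ?_
          rw [abs_mul]
          have habsw : |∏ i, ((-1:ℝ)^(γ i) * (((α i).choose (γ i) : ℕ) : ℝ))|
              = ∏ i, (((α i).choose (γ i) : ℕ) : ℝ) := by
            rw [Finset.abs_prod]
            refine Finset.prod_congr rfl fun i _ => ?_
            rw [abs_mul, abs_pow, abs_neg, abs_one, one_pow, one_mul, Nat.abs_cast]
          rw [habsw]
          exact mul_le_mul_of_nonneg_left (hball _ (hxnorm γ hγ))
            (Finset.prod_nonneg fun i _ => Nat.cast_nonneg _)
      _ = K * ∑ γ ∈ P, ∏ i, (((α i).choose (γ i) : ℕ) : ℝ) := by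
          rw [Finset.mul_sum]
          exact Finset.sum_congr rfl fun γ _ => by ring
      _ = K * 2^k := by
          congr 1
          rw [hP, ← Finset.prod_univ_sum (fun i => Finset.range (α i + 1))
            (fun i g => (((α i).choose g : ℕ) : ℝ))]
          have : ∀ i ∈ Finset.univ, (∑ g ∈ Finset.range (α i + 1),
              (((α i).choose g : ℕ) : ℝ)) = 2^(α i) := by
            intro i _
            rw [← Nat.cast_sum]
            rw [Nat.sum_range_choose]
            push_cast
            ring
          rw [Finset.prod_congr rfl this, Finset.prod_pow_eq_pow_sum, hsumα]
  -- combine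
  have hfac1 : (1:ℝ) ≤ ∏ i, (((α i).factorial : ℕ) : ℝ) := by
    rw [← Nat.cast_prod]
    exact_mod_cast Nat.one_le_iff_ne_zero.2 (Finset.prod_ne_zero_iff.2
      fun i _ => (Nat.factorial_pos (α i)).ne')
  have hSabs : |S| = |MvPolynomial.coeff α p| * ((k:ℝ)⁻¹)^k
      * ∏ i, (((α i).factorial : ℕ) : ℝ) := by
    rw [hS]
    rw [abs_mul, abs_mul, abs_mul, abs_pow, abs_pow, abs_neg, abs_one, one_pow, one_mul,
      abs_of_pos (inv_pos.2 hk0)]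
    congr 1
    rw [Finset.abs_prod]
    exact Finset.prod_congr rfl fun i _ => Nat.abs_cast _
  have hmain : |MvPolynomial.coeff α p| ≤ (2:ℝ)^k * (k:ℝ)^k * K := by
    have h5 : |MvPolynomial.coeff α p| * ((k:ℝ)⁻¹)^k ≤ K * 2^k := by
      calc |MvPolynomial.coeff α p| * ((k:ℝ)⁻¹)^k
          ≤ |MvPolynomial.coeff α p| * ((k:ℝ)⁻¹)^k * ∏ i, (((α i).factorial : ℕ) : ℝ) := by
            nth_rewrite 1 [← mul_one (|MvPolynomial.coeff α p| * ((k:ℝ)⁻¹)^k)]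
            exact mul_le_mul_of_nonneg_left hfac1 (by positivity)
        _ = |S| := hSabs.symm
        _ ≤ K * 2^k := hSbound
    have h6 : |MvPolynomial.coeff α p|
        = |MvPolynomial.coeff α p| * ((k:ℝ)⁻¹)^k * (k:ℝ)^k := by
      rw [mul_assoc, ← mul_pow, inv_mul_cancel₀ hk0.ne', one_pow, mul_one]
    rw [h6]
    calc |MvPolynomial.coeff α p| * ((k:ℝ)⁻¹)^k * (k:ℝ)^k
        ≤ K * 2^k * (k:ℝ)^k := mul_le_mul_of_nonneg_right h5 (by positivity)
      _ = (2:ℝ)^k * (k:ℝ)^k * K := by ring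
  refine le_trans hmain ?_
  apply mul_le_mul_of_nonneg_right _ hKnonneg
  have h7 : (2:ℝ)^k * (k:ℝ)^k = (((2 * k : ℕ)):ℝ)^k := by
    push_cast
    rw [mul_pow]
  rw [h7]
  have h8 : (2 * k : ℕ) ≤ (2 ^ (n + 2) * n * k : ℕ) := by
    have h9 : (4:ℕ) ≤ 2^(n+2) := by
      calc (4:ℕ) = 2^2 := by norm_num
        _ ≤ 2^(n+2) := Nat.pow_le_pow_right (by norm_num) (by omega)
    have h9' : (2:ℕ) ≤ 2^(n+2) * n := by
      calc (2:ℕ) ≤ 4 * 2 := by norm_num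
        _ ≤ 2^(n+2) * n := Nat.mul_le_mul h9 hn
    exact Nat.mul_le_mul h9' (le_refl k)
  have h10 : (((2 * k : ℕ)):ℝ) ≤ (((2 ^ (n + 2) * n * k : ℕ)):ℝ) := by exact_mod_cast h8
  exact pow_le_pow_left₀ (by positivity) h10 k

end
end
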